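/- arXiv:1910.13741 — 2 statements merged into one kernel-verified Lean document; each statement's English description precedes it below -/
import Mathlib

section
/- Let Φ : 𝔻 × 𝔻* → ℍ be the biholomorphism Φ(w₁,w₂) = (w₁w₂, w₂), with complex Jacobian determinant Φ'(w₁,w₂) = w₂. The map f ↦ Φ'·(f∘Φ) is a surjective isometry from H²(ℍ) onto H²(𝔻×𝔻): if f(z₁,z₂) = Σ_{j≥0} Σ_{k≥−j−1} a_{jk} z₁^j z₂^k ∈ H²(ℍ), then Φ'·(f∘Φ) (which has only nonnegative powers of w₂ and hence extends holomorphically to 𝔻×𝔻) satisfies ‖Φ'·(f∘Φ)‖²_{H²(𝔻×𝔻)} = ‖f‖²_{H²(ℍ)}, and every g ∈ H²(𝔻×𝔻) arises in this way. -/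
open MeasureTheory Real Complex Set Filter
open scoped ENNReal

noncomputable section

/-- The Hartogs triangle `ℍ = {(z₁,z₂) ∈ ℂ² : |z₁| < |z₂| < 1}`. -/
def Hartogs : Set (ℂ × ℂ) := {z | ‖z.1‖ < ‖z.2‖ ∧ ‖z.2‖ < 1}

/-- The bidisc `𝔻 × 𝔻`. -/
def diskProd : Set (ℂ × ℂ) := {w | ‖w.1‖ < 1 ∧ ‖w.2‖ < 1}

/-- `𝔻 × 𝔻*`, the disc times the punctured disc. -/
def diskPunct : Set (ℂ × ℂ) := {w | ‖w.1‖ < 1 ∧ ‖w.2‖ < 1 ∧ w.2 ≠ 0}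

/-- The biholomorphism `Φ : 𝔻 × 𝔻* → ℍ`, `Φ(w₁,w₂) = (w₁w₂, w₂)`. -/
def Phi (w : ℂ × ℂ) : ℂ × ℂ := (w.1 * w.2, w.2)

/-!
Under `Φ` the monomial `z₁ʲz₂ᵏ` pulls back to `w₁ʲw₂ʲ⁺ᵏ`, so multiplying by the Jacobian `w₂`
turns it into `w₁ʲw₂ʲ⁺ᵏ⁺¹`. The index map `(j, k) ↦ (j, j + k + 1)` is a bijection from
`{k ≥ -j - 1}` onto `ℕ × ℕ`, so `f ↦ Φ'·(f∘Φ)` merely relabels coefficients and preserves their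
`ℓ²` norm; its inverse is `g ↦ (g ∘ Φ⁻¹) / z₂`. Square-summable coefficients are bounded, and a
double power series with bounded coefficients is holomorphic on the bidisc by termwise
differentiation.
-/

lemma norm_le_sqrt_tsum_norm_sq {ι E : Type*} [SeminormedAddCommGroup E] {a : ι → E}
    (ha : Summable fun i => ‖a i‖ ^ 2) (i : ι) : ‖a i‖ ≤ √(∑' i, ‖a i‖ ^ 2) :=
  Real.le_sqrt_of_sq_le (ha.le_tsum i fun _ _ => by positivity)

lemma summable_nat_mul_pow_sub_one {r : ℝ} (h0 : 0 ≤ r) (h1 : r < 1) :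
    Summable fun n : ℕ => n * r ^ (n - 1) := by
  refine (summable_nat_add_iff 1).mp ?_
  have hlin : Summable fun n : ℕ => (n : ℝ) * r ^ n := by
    simpa using summable_pow_mul_geometric_of_norm_lt_one (R := ℝ) 1
      (by rwa [Real.norm_eq_abs, abs_of_nonneg h0])
  refine (hlin.add (summable_geometric_of_lt_one h0 h1)).congr fun n => ?_
  simp only [Nat.cast_add, Nat.cast_one, Nat.add_sub_cancel]
  ring

lemma hasFDerivAt_monomial (c : ℂ) (j k : ℕ) (w : ℂ × ℂ) :
    HasFDerivAt (fun w : ℂ × ℂ => c * w.1 ^ j * w.2 ^ k)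
      (c • ((j * w.1 ^ (j - 1) * w.2 ^ k) • ContinuousLinearMap.fst ℂ ℂ ℂ +
        (w.1 ^ j * (k * w.2 ^ (k - 1))) • ContinuousLinearMap.snd ℂ ℂ ℂ)) w := by
  have h1 : HasFDerivAt (fun w : ℂ × ℂ => w.1 ^ j)
      ((j * w.1 ^ (j - 1)) • ContinuousLinearMap.fst ℂ ℂ ℂ) w :=
    (hasDerivAt_pow j w.1).comp_hasFDerivAt w hasFDerivAt_fst
  have h2 : HasFDerivAt (fun w : ℂ × ℂ => w.2 ^ k)
      ((k * w.2 ^ (k - 1)) • ContinuousLinearMap.snd ℂ ℂ ℂ) w :=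
    (hasDerivAt_pow k w.2).comp_hasFDerivAt w hasFDerivAt_snd
  refine ((h1.const_mul c).mul h2).congr_fderiv ?_
  ext <;> simp <;> ring

lemma norm_fderiv_monomial_le {c : ℂ} {C r : ℝ} (hc : ‖c‖ ≤ C) {w : ℂ × ℂ} (hw : ‖w‖ ≤ r)
    (j k : ℕ) :
    ‖c • ((j * w.1 ^ (j - 1) * w.2 ^ k) • ContinuousLinearMap.fst ℂ ℂ ℂ +
        (w.1 ^ j * (k * w.2 ^ (k - 1))) • ContinuousLinearMap.snd ℂ ℂ ℂ)‖ ≤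
      C * (j * r ^ (j - 1) * r ^ k + r ^ j * (k * r ^ (k - 1))) := by
  have h1 : ‖w.1‖ ≤ r := (norm_fst_le w).trans hw
  have h2 : ‖w.2‖ ≤ r := (norm_snd_le w).trans hw
  have hr : 0 ≤ r := (norm_nonneg w).trans hw
  have hfst : ‖ContinuousLinearMap.fst ℂ ℂ ℂ‖ ≤ 1 := ContinuousLinearMap.norm_fst_le ..
  have hsnd : ‖ContinuousLinearMap.snd ℂ ℂ ℂ‖ ≤ 1 := ContinuousLinearMap.norm_snd_le ..
  rw [norm_smul]
  refine mul_le_mul hc ?_ (norm_nonneg _) ((norm_nonneg c).trans hc)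
  refine (norm_add_le _ _).trans (add_le_add ?_ ?_) <;>
    rw [norm_smul] <;>
    simp only [norm_mul, norm_pow, Complex.norm_natCast]
  · calc _ ≤ j * ‖w.1‖ ^ (j - 1) * ‖w.2‖ ^ k * 1 := by gcongr
      _ ≤ _ := by rw [mul_one]; gcongr
  · calc _ ≤ ‖w.1‖ ^ j * (k * ‖w.2‖ ^ (k - 1)) * 1 := by gcongr
      _ ≤ _ := by rw [mul_one]; gcongr

lemma diskProd_eq_ball : diskProd = Metric.ball 0 1 := by
  ext w
  simp [diskProd, Prod.norm_def]

lemma summable_monomial {c : ℕ × ℕ → ℂ} {C : ℝ} (hc : ∀ jk, ‖c jk‖ ≤ C) {w : ℂ × ℂ}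
    (hw : ‖w‖ < 1) : Summable fun jk : ℕ × ℕ => c jk * w.1 ^ jk.1 * w.2 ^ jk.2 := by
  have hgeom := summable_geometric_of_lt_one (norm_nonneg w) hw
  refine Summable.of_norm_bounded
    (((hgeom.mul_of_nonneg hgeom (fun _ => by positivity) fun _ => by positivity)).mul_left C)
    fun jk => ?_
  simp only [norm_mul, norm_pow]
  have hC : 0 ≤ C := (norm_nonneg _).trans (hc jk)
  rw [← mul_assoc]
  gcongr
  exacts [hc jk, norm_fst_le w, norm_snd_le w]

lemma differentiableOn_tsum_monomial {c : ℕ × ℕ → ℂ} {C : ℝ} (hc : ∀ jk, ‖c jk‖ ≤ C) :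
    DifferentiableOn ℂ (fun w : ℂ × ℂ => ∑' jk : ℕ × ℕ, c jk * w.1 ^ jk.1 * w.2 ^ jk.2)
      (Metric.ball 0 1) := by
  intro w₀ hw₀
  rw [mem_ball_zero_iff] at hw₀
  obtain ⟨r, hw₀r, hr1⟩ := exists_between hw₀
  have hr0 : 0 ≤ r := (norm_nonneg w₀).trans hw₀r.le
  have hgeom := summable_geometric_of_lt_one hr0 hr1
  have hder := summable_nat_mul_pow_sub_one hr0 hr1
  have hu : Summable fun jk : ℕ × ℕ =>
      C * (jk.1 * r ^ (jk.1 - 1) * r ^ jk.2 + r ^ jk.1 * (jk.2 * r ^ (jk.2 - 1))) :=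
    ((hder.mul_of_nonneg hgeom (fun _ => by positivity) fun _ => by positivity).add
      (hgeom.mul_of_nonneg hder (fun _ => by positivity) fun _ => by positivity)).mul_left C
  refine (hasFDerivAt_tsum_of_isPreconnected hu Metric.isOpen_ball
    (convex_ball 0 r).isPreconnected (fun jk w _ => hasFDerivAt_monomial (c jk) jk.1 jk.2 w)
    (fun jk w hw => norm_fderiv_monomial_le (hc jk) (mem_ball_zero_iff.mp hw).le jk.1 jk.2)
    (mem_ball_zero_iff.mpr hw₀r) (summable_monomial hc hw₀)
    (mem_ball_zero_iff.mpr hw₀r)).differentiableAt.differentiableWithinAt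

/-- The coefficient of `w₁ʲw₂ᵏ` in `Φ'·(f∘Φ)` is the coefficient `a_{j, k-j-1}` of `f`. -/
def hartogsIndex (jk : ℕ × ℕ) : ℕ × ℤ := (jk.1, (jk.2 : ℤ) - (jk.1 : ℤ) - 1)

lemma hartogsIndex_injective : Function.Injective hartogsIndex := by
  rintro ⟨j, k⟩ ⟨j', k'⟩ h
  simp only [hartogsIndex, Prod.mk.injEq] at h ⊢
  omega

lemma mem_range_hartogsIndex {jk : ℕ × ℤ} :
    jk ∈ range hartogsIndex ↔ -(jk.1 : ℤ) - 1 ≤ jk.2 := by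
  refine ⟨?_, fun h => ⟨(jk.1, (jk.2 + jk.1 + 1).toNat), ?_⟩⟩
  · rintro ⟨⟨j, k⟩, rfl⟩
    simp [hartogsIndex]
  · ext
    · rfl
    · simp only [hartogsIndex, Int.ofNat_toNat]; omega

lemma extend_hartogsIndex_eq_zero (b : ℕ × ℕ → ℂ) {jk : ℕ × ℤ} (h : jk.2 < -(jk.1 : ℤ) - 1) :
    Function.extend hartogsIndex b 0 jk = 0 :=
  Function.extend_apply' _ _ _ fun hjk => (mem_range_hartogsIndex.mp hjk).not_gt h

lemma hasSum_comp_hartogsIndex_iff {E : Type*} [AddCommMonoid E] [TopologicalSpace E]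
    {F : ℕ × ℤ → E} (hF : ∀ jk : ℕ × ℤ, jk.2 < -(jk.1 : ℤ) - 1 → F jk = 0) {s : E} :
    HasSum (F ∘ hartogsIndex) s ↔ HasSum F s :=
  hartogsIndex_injective.hasSum_iff fun jk hjk =>
    hF jk (by rw [mem_range_hartogsIndex] at hjk; omega)

lemma mul_monomial_Phi {w : ℂ × ℂ} (hw : w.2 ≠ 0) (c : ℂ) (jk : ℕ × ℕ) :
    w.2 * (c * (Phi w).1 ^ (hartogsIndex jk).1 * (Phi w).2 ^ (hartogsIndex jk).2) =
      c * w.1 ^ jk.1 * w.2 ^ jk.2 := by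
  simp only [Phi, hartogsIndex, zpow_sub₀ hw, zpow_one, zpow_natCast, mul_pow]
  field_simp

lemma hasSum_norm_sq_comp_hartogsIndex_iff {a : ℕ × ℤ → ℂ}
    (ha : ∀ jk : ℕ × ℤ, jk.2 < -(jk.1 : ℤ) - 1 → a jk = 0) {s : ℝ} :
    HasSum (fun jk : ℕ × ℕ => ‖a (hartogsIndex jk)‖ ^ 2) s ↔ HasSum (fun jk => ‖a jk‖ ^ 2) s :=
  hasSum_comp_hartogsIndex_iff (F := fun jk => ‖a jk‖ ^ 2) fun jk h => by simp [ha jk h]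

lemma hasSum_Phi_iff {a : ℕ × ℤ → ℂ} (ha : ∀ jk : ℕ × ℤ, jk.2 < -(jk.1 : ℤ) - 1 → a jk = 0)
    {w : ℂ × ℂ} (hw : w.2 ≠ 0) {s : ℂ} :
    HasSum (fun jk : ℕ × ℕ => a (hartogsIndex jk) * w.1 ^ jk.1 * w.2 ^ jk.2) (w.2 * s) ↔
      HasSum (fun jk : ℕ × ℤ => a jk * (Phi w).1 ^ jk.1 * (Phi w).2 ^ jk.2) s := by
  conv_rhs =>
    rw [← hasSum_mul_left_iff hw, ← hasSum_comp_hartogsIndex_iff fun jk h => by simp [ha jk h]]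
  simp only [Function.comp_def, mul_monomial_Phi hw]

def PhiInv (z : ℂ × ℂ) : ℂ × ℂ := (z.1 / z.2, z.2)

lemma snd_ne_zero_of_mem_Hartogs {z : ℂ × ℂ} (hz : z ∈ Hartogs) : z.2 ≠ 0 :=
  norm_pos_iff.mp ((norm_nonneg _).trans_lt hz.1)

lemma Phi_mem_Hartogs {w : ℂ × ℂ} (hw : w ∈ diskPunct) : Phi w ∈ Hartogs := by
  obtain ⟨hw1, hw2, hw0⟩ := hw
  refine ⟨?_, hw2⟩
  simpa [Phi] using mul_lt_of_lt_one_left (norm_pos_iff.mpr hw0) hw1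

lemma PhiInv_mem_diskProd {z : ℂ × ℂ} (hz : z ∈ Hartogs) : PhiInv z ∈ diskProd :=
  ⟨by simpa [PhiInv, norm_div] using (div_lt_one ((norm_nonneg _).trans_lt hz.1)).mpr hz.1, hz.2⟩

lemma Phi_PhiInv {z : ℂ × ℂ} (hz : z.2 ≠ 0) : Phi (PhiInv z) = z := by
  simp [Phi, PhiInv, hz]

lemma PhiInv_Phi {w : ℂ × ℂ} (hw : w.2 ≠ 0) : PhiInv (Phi w) = w := by
  simp [Phi, PhiInv, hw]

lemma differentiableOn_PhiInv : DifferentiableOn ℂ PhiInv Hartogs := by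
  unfold PhiInv
  simp only [div_eq_mul_inv]
  exact (differentiableOn_fst.mul (differentiableOn_snd.inv fun _ hz =>
    snd_ne_zero_of_mem_Hartogs hz)).prodMk differentiableOn_snd

lemma hasSum_PhiInv {a : ℕ × ℤ → ℂ} (ha : ∀ jk : ℕ × ℤ, jk.2 < -(jk.1 : ℤ) - 1 → a jk = 0)
    {g : ℂ × ℂ → ℂ}
    (hg : ∀ w ∈ diskProd,
      HasSum (fun jk : ℕ × ℕ => a (hartogsIndex jk) * w.1 ^ jk.1 * w.2 ^ jk.2) (g w))
    {z : ℂ × ℂ} (hz : z ∈ Hartogs) :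
    HasSum (fun jk : ℕ × ℤ => a jk * z.1 ^ jk.1 * z.2 ^ jk.2) (z.2⁻¹ * g (PhiInv z)) := by
  have hz2 := snd_ne_zero_of_mem_Hartogs hz
  have hsum := (hasSum_Phi_iff ha (w := PhiInv z) (s := z.2⁻¹ * g (PhiInv z)) hz2).mp
    (by simpa only [PhiInv, mul_inv_cancel_left₀ hz2] using hg _ (PhiInv_mem_diskProd hz))
  rwa [Phi_PhiInv hz2] at hsum

/-- with `Φ(w₁,w₂) = (w₁w₂,w₂)` and complex Jacobian `Φ'(w₁,w₂) = w₂`, the map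
`f ↦ Φ'·(f∘Φ)` is a surjective isometry from `H²(ℍ)` (holomorphic
`f = Σ_{j≥0,k≥−j−1} a_{jk} z₁ʲz₂ᵏ` with `‖f‖² = Σ |a_{jk}|² < ∞`) onto the Hardy space
`H²(𝔻×𝔻)` of the bidisc: `Φ'·(f∘Φ)` has only nonnegative powers of `w₂`, extends
holomorphically to `𝔻×𝔻` with coefficients `b_{jk} = a_{j,k−j−1}`,
`‖Φ'·(f∘Φ)‖²_{H²(𝔻×𝔻)} = ‖f‖²_{H²(ℍ)}`, and every `g ∈ H²(𝔻×𝔻)` arises this way. -/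
theorem statement15 :
    (∀ (a : ℕ × ℤ → ℂ) (f : ℂ × ℂ → ℂ),
      (∀ jk : ℕ × ℤ, jk.2 < -(jk.1 : ℤ) - 1 → a jk = 0) →
      Summable (fun jk : ℕ × ℤ => ‖a jk‖ ^ 2) →
      (∀ z ∈ Hartogs, HasSum (fun jk : ℕ × ℤ => a jk * z.1 ^ jk.1 * z.2 ^ jk.2) (f z)) →
      ∃ g : ℂ × ℂ → ℂ, DifferentiableOn ℂ g diskProd ∧
        (∀ w ∈ diskProd, HasSum
          (fun jk : ℕ × ℕ => a (jk.1, (jk.2 : ℤ) - (jk.1 : ℤ) - 1) * w.1 ^ jk.1 * w.2 ^ jk.2)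
          (g w)) ∧
        (∀ w ∈ diskPunct, g w = w.2 * f (Phi w)) ∧
        ∑' jk : ℕ × ℕ, ‖a (jk.1, (jk.2 : ℤ) - (jk.1 : ℤ) - 1)‖ ^ 2 =
          ∑' jk : ℕ × ℤ, ‖a jk‖ ^ 2) ∧
    (∀ (b : ℕ × ℕ → ℂ) (g : ℂ × ℂ → ℂ),
      Summable (fun jk : ℕ × ℕ => ‖b jk‖ ^ 2) →
      (∀ w ∈ diskProd, HasSum (fun jk : ℕ × ℕ => b jk * w.1 ^ jk.1 * w.2 ^ jk.2) (g w)) →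
      ∃ (a : ℕ × ℤ → ℂ) (f : ℂ × ℂ → ℂ),
        (∀ jk : ℕ × ℤ, jk.2 < -(jk.1 : ℤ) - 1 → a jk = 0) ∧
        Summable (fun jk : ℕ × ℤ => ‖a jk‖ ^ 2) ∧
        DifferentiableOn ℂ f Hartogs ∧
        (∀ z ∈ Hartogs, HasSum (fun jk : ℕ × ℤ => a jk * z.1 ^ jk.1 * z.2 ^ jk.2) (f z)) ∧
        (∀ w ∈ diskPunct, g w = w.2 * f (Phi w)) ∧
        ∑' jk : ℕ × ℕ, ‖b jk‖ ^ 2 = ∑' jk : ℕ × ℤ, ‖a jk‖ ^ 2) := by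
  constructor
  · intro a f ha hsum hf
    have hbd := fun jk => norm_le_sqrt_tsum_norm_sq hsum (hartogsIndex jk)
    have hsum_at (w : ℂ × ℂ) (hw : w ∈ diskProd) :=
      (summable_monomial hbd (mem_ball_zero_iff.mp (diskProd_eq_ball ▸ hw))).hasSum
    refine ⟨fun w => ∑' jk : ℕ × ℕ, a (hartogsIndex jk) * w.1 ^ jk.1 * w.2 ^ jk.2,
      diskProd_eq_ball ▸ differentiableOn_tsum_monomial hbd, hsum_at, fun w hw => ?_, ?_⟩
    · exact (hsum_at w ⟨hw.1, hw.2.1⟩).unique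
        ((hasSum_Phi_iff ha hw.2.2).mpr (hf _ (Phi_mem_Hartogs hw)))
    · exact ((hasSum_norm_sq_comp_hartogsIndex_iff ha).mpr hsum.hasSum).tsum_eq
  · intro b g hb hg
    set a := Function.extend hartogsIndex b 0
    have hab : ∀ jk, a (hartogsIndex jk) = b jk := hartogsIndex_injective.extend_apply b 0
    have ha : ∀ jk : ℕ × ℤ, jk.2 < -(jk.1 : ℤ) - 1 → a jk = 0 :=
      fun _ => extend_hartogsIndex_eq_zero b
    have hnorm : HasSum (fun jk => ‖a jk‖ ^ 2) (∑' jk : ℕ × ℕ, ‖b jk‖ ^ 2) :=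
      (hasSum_norm_sq_comp_hartogsIndex_iff ha).mp (by simpa only [hab] using hb.hasSum)
    have hg_diff : DifferentiableOn ℂ g diskProd :=
      (diskProd_eq_ball ▸ differentiableOn_tsum_monomial (norm_le_sqrt_tsum_norm_sq hb)).congr
        fun w hw => (hg w hw).tsum_eq.symm
    refine ⟨a, fun z => z.2⁻¹ * g (PhiInv z), ha, hnorm.summable, ?_,
      fun z hz => hasSum_PhiInv ha (by simpa only [hab] using hg) hz, fun w hw => ?_,
      hnorm.tsum_eq.symm⟩
    · exact (differentiableOn_snd.inv fun z hz => snd_ne_zero_of_mem_Hartogs hz).mul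
        (hg_diff.comp differentiableOn_PhiInv fun z hz => PhiInv_mem_diskProd hz)
    · show g w = w.2 * ((Phi w).2⁻¹ * g (PhiInv (Phi w)))
      rw [PhiInv_Phi hw.2.2, Phi, mul_inv_cancel_left₀ hw.2.2]
end
end

section
/- The Dirichlet space D(ℍ) is a reproducing kernel Hilbert space with kernel K_D((z₁,z₂),(w₁,w₂)) = (1/(z₁\overline{w₁})) log(1/(1 − (z₁\overline{w₁})/(z₂\overline{w₂}))) · log(1/(1 − z₂\overline{w₂})): for all (z₁,z₂),(w₁,w₂) ∈ ℍ with z₁\overline{w₁} ≠ 0, the absolutely convergent series Σ_{j≥0} Σ_{k≥−j} (z₁\overline{w₁})^j (z₂\overline{w₂})^k / ((j+1)(j+k+1)) equals K_D((z₁,z₂),(w₁,w₂)); moreover for each (w₁,w₂) ∈ ℍ the function K_D(·,(w₁,w₂)) belongs to D(ℍ) and f(w₁,w₂) = ⟨f, K_D(·,(w₁,w₂))⟩_D for every f ∈ D(ℍ), where ⟨Σ a_{jk} z₁^j z₂^k, Σ b_{jk} z₁^j z₂^k⟩_D = Σ_{j≥0} Σ_{k≥−j} (j+1)(j+k+1)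 a_{jk}\overline{b_{jk}}. -/
/-!
Write `u = z₁w̄₁`, `v = z₂w̄₂` and `m = j + k`. Since `|u| < |v| < 1`, the `(j, m)` term of the
kernel series factors as `((u/v)ʲ/(j+1)) · (vᵐ/(m+1))`, so the double series is the product of two
absolutely convergent copies of `∑ xⁿ/(n+1) = -log(1-x)/x`, which gives `K_D`.
The weighted squared coefficients `(j+1)(m+1)|c_{jk}(w)|²` of `K_D(·, w)` are exactly the moduli
of the terms of the same series at `(u, v) = (w̄₁², w̄₂²)`, hence summable. Finally the weight
`(j+1)(j+k+1)` cancels the denominator of the coefficient, so `⟨f, K_D(·, w)⟩_D` is termwise the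
power series of `f` at `w`.
-/

open MeasureTheory Real Complex Set Filter
open scoped ENNReal

noncomputable section

/-- The Dirichlet kernel of the Hartogs triangle,
`K_D(z,w) = (1/(z₁w̄₁)) log(1/(1 − z₁w̄₁/(z₂w̄₂))) log(1/(1 − z₂w̄₂))`
(principal branch of the logarithm). -/
def dirKern (z w : ℂ × ℂ) : ℂ :=
  (z.1 * (starRingEnd ℂ) w.1)⁻¹ *
    Complex.log (1 / (1 - z.1 * (starRingEnd ℂ) w.1 / (z.2 * (starRingEnd ℂ) w.2))) *
    Complex.log (1 / (1 - z.2 * (starRingEnd ℂ) w.2))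

/-- The `(j,k)` coefficient of `K_D(·,w)`:
`w̄₁ʲw̄₂ᵏ/((j+1)(j+k+1))` for `k ≥ −j`, and `0` otherwise. -/
def dirKernCoef (w : ℂ × ℂ) (jk : ℕ × ℤ) : ℂ :=
  if -(jk.1 : ℤ) ≤ jk.2 then
    (starRingEnd ℂ) w.1 ^ jk.1 * (starRingEnd ℂ) w.2 ^ jk.2 /
      (((jk.1 : ℂ) + 1) * ((((jk.1 : ℤ) + jk.2 : ℤ) : ℂ) + 1))
  else 0

open ComplexConjugate

lemma Complex.hasSum_pow_div_succ {x : ℂ} (hx : x ≠ 0) (hx1 : ‖x‖ < 1) :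
    HasSum (fun n : ℕ => x ^ n / ((n : ℂ) + 1)) (-Complex.log (1 - x) / x) := by
  rw [div_eq_inv_mul]
  refine ((hasSum_taylorSeries_neg_log' hx1).mul_left x⁻¹).congr_fun fun n => ?_
  rw [pow_succ', mul_div_assoc, inv_mul_cancel_left₀ hx]

lemma Complex.summable_norm_pow_div_succ {x : ℂ} (hx1 : ‖x‖ < 1) :
    Summable (fun n : ℕ => ‖x ^ n / ((n : ℂ) + 1)‖) := by
  refine (summable_geometric_of_lt_one (norm_nonneg x) hx1).of_nonneg_of_le
    (fun _ => norm_nonneg _) fun n => ?_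
  rw [norm_div, norm_pow]
  exact div_le_self (by positivity) (by norm_cast; simp)

lemma Complex.log_one_div_one_sub {y : ℂ} (hy : ‖y‖ < 1) :
    Complex.log (1 / (1 - y)) = -Complex.log (1 - y) := by
  rw [one_div]
  refine Complex.log_inv _ fun h => ?_
  rw [Complex.arg_eq_pi_iff, Complex.sub_re, Complex.one_re] at h
  linarith [h.1, Complex.re_le_norm y]

/-- The `(j, m)` term of the series of `K_D`, with `u = z₁w̄₁`, `v = z₂w̄₂` and `m = j + k`. -/
def dirKernTerm (u v : ℂ) (jm : ℕ × ℕ) : ℂ :=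
  u ^ jm.1 * v ^ ((jm.2 : ℤ) - (jm.1 : ℤ)) / (((jm.1 : ℂ) + 1) * ((jm.2 : ℂ) + 1))

lemma dirKernTerm_eq_mul {u v : ℂ} (hv : v ≠ 0) (jm : ℕ × ℕ) :
    dirKernTerm u v jm = (u / v) ^ jm.1 / ((jm.1 : ℂ) + 1) * (v ^ jm.2 / ((jm.2 : ℂ) + 1)) := by
  rw [dirKernTerm, zpow_sub₀ hv, zpow_natCast, zpow_natCast, div_pow]
  field_simp

lemma summable_norm_dirKernTerm {u v : ℂ} (huv : ‖u‖ < ‖v‖) (hv1 : ‖v‖ < 1) :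
    Summable (fun jm => ‖dirKernTerm u v jm‖) := by
  have hv : v ≠ 0 := norm_pos_iff.mp ((norm_nonneg u).trans_lt huv)
  have hx1 : ‖u / v‖ < 1 := by rwa [norm_div, div_lt_one (norm_pos_iff.mpr hv)]
  simpa only [dirKernTerm_eq_mul hv] using
    (Complex.summable_norm_pow_div_succ hx1).mul_norm (Complex.summable_norm_pow_div_succ hv1)

lemma hasSum_dirKernTerm {u v : ℂ} (hu : u ≠ 0) (huv : ‖u‖ < ‖v‖) (hv1 : ‖v‖ < 1) :
    HasSum (dirKernTerm u v)
      (u⁻¹ * Complex.log (1 / (1 - u / v)) * Complex.log (1 / (1 - v))) := by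
  have hv : v ≠ 0 := norm_pos_iff.mp ((norm_nonneg u).trans_lt huv)
  have hx1 : ‖u / v‖ < 1 := by rwa [norm_div, div_lt_one (norm_pos_iff.mpr hv)]
  have hsum := summable_mul_of_summable_norm (Complex.summable_norm_pow_div_succ hx1)
    (Complex.summable_norm_pow_div_succ hv1)
  have hprod := (Complex.hasSum_pow_div_succ (div_ne_zero hu hv) hx1).mul
    (Complex.hasSum_pow_div_succ hv hv1) hsum
  have hval : -Complex.log (1 - u / v) / (u / v) * (-Complex.log (1 - v) / v) =
      u⁻¹ * Complex.log (1 / (1 - u / v)) * Complex.log (1 / (1 - v)) := by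
    rw [Complex.log_one_div_one_sub hx1, Complex.log_one_div_one_sub hv1]
    field_simp
  rw [← hval, funext (dirKernTerm_eq_mul hv)]
  exact hprod

lemma weight_mul_norm_sq_dirKernTerm (u v : ℂ) (jm : ℕ × ℕ) :
    ((jm.1 : ℝ) + 1) * ((jm.2 : ℝ) + 1) * ‖dirKernTerm u v jm‖ ^ 2 =
      ‖dirKernTerm (u ^ 2) (v ^ 2) jm‖ := by
  have h1 : ‖((jm.1 : ℂ) + 1)‖ = (jm.1 : ℝ) + 1 := by norm_cast
  have h2 : ‖((jm.2 : ℂ) + 1)‖ = (jm.2 : ℝ) + 1 := by norm_cast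
  have hv2 : (‖v‖ ^ 2) ^ ((jm.2 : ℤ) - jm.1) = (‖v‖ ^ ((jm.2 : ℤ) - jm.1)) ^ 2 := by
    rw [← zpow_natCast ‖v‖ 2, ← zpow_mul, mul_comm, zpow_mul, zpow_natCast]
  simp only [dirKernTerm, norm_div, norm_mul, norm_pow, norm_zpow, h1, h2, hv2]
  field_simp
  ring

lemma norm_mul_conj_lt {z w : ℂ × ℂ} (hz : z ∈ Hartogs) (hw : w ∈ Hartogs) :
    ‖z.1 * conj w.1‖ < ‖z.2 * conj w.2‖ ∧ ‖z.2 * conj w.2‖ < 1 := by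
  simp only [norm_mul, Complex.norm_conj]
  exact ⟨mul_lt_mul'' hz.1 hw.1 (norm_nonneg _) (norm_nonneg _),
    mul_lt_one_of_nonneg_of_lt_one_left (norm_nonneg _) hz.2 hw.2.le⟩

lemma norm_conj_sq_lt {w : ℂ × ℂ} (hw : w ∈ Hartogs) :
    ‖conj w.1 ^ 2‖ < ‖conj w.2 ^ 2‖ ∧ ‖conj w.2 ^ 2‖ < 1 := by
  simp only [norm_pow, Complex.norm_conj]
  exact ⟨pow_lt_pow_left₀ hw.1 (norm_nonneg _) two_ne_zero,
    pow_lt_one₀ (norm_nonneg _) hw.2 two_ne_zero⟩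

def shear (jm : ℕ × ℕ) : ℕ × ℤ := (jm.1, (jm.2 : ℤ) - (jm.1 : ℤ))

lemma shear_injective : Function.Injective shear := by
  rintro ⟨j, m⟩ ⟨j', m'⟩ h
  simp only [shear, Prod.mk.injEq] at h
  obtain ⟨rfl, h⟩ := h
  simp only [Prod.mk.injEq, true_and]
  omega

lemma mem_range_shear {jk : ℕ × ℤ} (h : -(jk.1 : ℤ) ≤ jk.2) : jk ∈ Set.range shear :=
  ⟨(jk.1, (jk.2 + jk.1).toNat), by simp only [shear]; congr; omega⟩

lemma summable_comp_shear_iff {α : Type*} [AddCommMonoid α] [TopologicalSpace α]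
    {f : ℕ × ℤ → α} (hf : ∀ jk : ℕ × ℤ, jk.2 < -(jk.1 : ℤ) → f jk = 0) :
    Summable (f ∘ shear) ↔ Summable f :=
  shear_injective.summable_iff fun jk hjk =>
    hf jk (lt_of_not_ge fun h => hjk (mem_range_shear h))

lemma dirKernCoef_of_lt (w : ℂ × ℂ) {jk : ℕ × ℤ} (h : jk.2 < -(jk.1 : ℤ)) :
    dirKernCoef w jk = 0 :=
  if_neg (not_le.mpr h)

lemma dirKernCoef_shear (w : ℂ × ℂ) (jm : ℕ × ℕ) :
    dirKernCoef w (shear jm) = dirKernTerm (conj w.1) (conj w.2) jm := by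
  rw [dirKernCoef, if_pos (by simp [shear]), dirKernTerm]
  simp [shear]

lemma weight_mul_conj_dirKernCoef (w : ℂ × ℂ) {jk : ℕ × ℤ} (h : -(jk.1 : ℤ) ≤ jk.2) :
    ((jk.1 : ℂ) + 1) * ((((jk.1 : ℤ) + jk.2 : ℤ) : ℂ) + 1) * conj (dirKernCoef w jk) =
      w.1 ^ jk.1 * w.2 ^ jk.2 := by
  have hj : (jk.1 : ℂ) + 1 ≠ 0 := Nat.cast_add_one_ne_zero _
  have hk : (((jk.1 : ℤ) + jk.2 : ℤ) : ℂ) + 1 ≠ 0 := by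
    exact_mod_cast (by omega : (jk.1 : ℤ) + jk.2 + 1 ≠ 0)
  rw [dirKernCoef, if_pos h]
  simp only [map_div₀, map_mul, map_pow, map_zpow₀, Complex.conj_conj, map_add, map_one,
    map_natCast, map_intCast]
  field_simp

/-- the Dirichlet space `D(ℍ)` is a reproducing kernel Hilbert space with
kernel `K_D`: for `z, w ∈ ℍ` with `z₁w̄₁ ≠ 0`, the absolutely convergent series
`Σ_{j≥0,k≥−j} (z₁w̄₁)ʲ(z₂w̄₂)ᵏ/((j+1)(j+k+1))` equals `K_D(z,w)`; each `K_D(·,w)` belongs to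
`D(ℍ)`; and `f(w) = ⟨f, K_D(·,w)⟩_D` for every `f ∈ D(ℍ)`. -/
theorem statement19 :
    (∀ z ∈ Hartogs, ∀ w ∈ Hartogs, z.1 * (starRingEnd ℂ) w.1 ≠ 0 →
      Summable (fun jm : ℕ × ℕ =>
        ‖(z.1 * (starRingEnd ℂ) w.1) ^ jm.1 *
            (z.2 * (starRingEnd ℂ) w.2) ^ ((jm.2 : ℤ) - (jm.1 : ℤ)) /
          (((jm.1 : ℂ) + 1) * ((jm.2 : ℂ) + 1))‖) ∧
      HasSum (fun jm : ℕ × ℕ =>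
        (z.1 * (starRingEnd ℂ) w.1) ^ jm.1 *
            (z.2 * (starRingEnd ℂ) w.2) ^ ((jm.2 : ℤ) - (jm.1 : ℤ)) /
          (((jm.1 : ℂ) + 1) * ((jm.2 : ℂ) + 1)))
        (dirKern z w)) ∧
    (∀ w ∈ Hartogs,
      Summable (fun jk : ℕ × ℤ =>
        ((jk.1 : ℝ) + 1) * ((((jk.1 : ℤ) + jk.2 : ℤ) : ℝ) + 1) * ‖dirKernCoef w jk‖ ^ 2)) ∧
    (∀ (f : ℂ × ℂ → ℂ) (a : ℕ × ℤ → ℂ),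
      (∀ jk : ℕ × ℤ, jk.2 < -(jk.1 : ℤ) → a jk = 0) →
      Summable (fun jk : ℕ × ℤ =>
        ((jk.1 : ℝ) + 1) * ((((jk.1 : ℤ) + jk.2 : ℤ) : ℝ) + 1) * ‖a jk‖ ^ 2) →
      (∀ z ∈ Hartogs, HasSum (fun jk : ℕ × ℤ => a jk * z.1 ^ jk.1 * z.2 ^ jk.2) (f z)) →
      ∀ w ∈ Hartogs,
        HasSum (fun jk : ℕ × ℤ =>
          ((jk.1 : ℂ) + 1) * ((((jk.1 : ℤ) + jk.2 : ℤ) : ℂ) + 1) * a jk *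
            (starRingEnd ℂ) (dirKernCoef w jk))
          (f w)) := by
  refine ⟨fun z hz w hw hu => ?_, fun w hw => ?_, fun f a ha _ hf w hw => ?_⟩
  · obtain ⟨huv, hv1⟩ := norm_mul_conj_lt hz hw
    exact ⟨summable_norm_dirKernTerm huv hv1, hasSum_dirKernTerm hu huv hv1⟩
  · obtain ⟨huv, hv1⟩ := norm_conj_sq_lt hw
    refine (summable_comp_shear_iff fun jk h => by simp [dirKernCoef_of_lt w h]).mp ?_
    refine (summable_norm_dirKernTerm huv hv1).congr fun jm => ?_
    rw [← weight_mul_norm_sq_dirKernTerm, Function.comp_apply, dirKernCoef_shear]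
    push_cast [shear]
    ring
  · refine (hf w hw).congr_fun fun jk => ?_
    rcases lt_or_ge jk.2 (-(jk.1 : ℤ)) with h | h
    · simp [ha jk h]
    · rw [mul_comm _ (a jk), mul_assoc, weight_mul_conj_dirKernCoef w h, mul_assoc]
end
end
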